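/- For an ordered Π-net with initial marking m0, the quantities m̃(P_i) = ∑_{p ∈ P_i} m̃(p) are invariants of reachability: for every reachable marking m ∈ R(m0) and every level i, m̃(P_i) = m̃0(P_i). Equivalently, the vectors v_i = ∑_{p ∈ P_i} B(p), where B is the matrix of the linear map m ↦ m̃, are S-semi-flows of the net (v_i · W = 0). -/

import Mathlib

open Finset

/-- A transition `t` is enabled at marking `m`. -/
def enabledAt {P T : Type*} (Wm : P → T → ℕ) (m : P → ℕ) (t : T) : Prop :=
  ∀ p, Wm p t ≤ m p

/-- Firing transition `t` at marking `m`. -/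
def fireAt {P T : Type*} (Wm Wp : P → T → ℕ) (m : P → ℕ) (t : T) : P → ℕ :=
  fun p => m p - Wm p t + Wp p t

/-- One step of the reachability graph. -/
def step {P T : Type*} (Wm Wp : P → T → ℕ) (m m' : P → ℕ) : Prop :=
  ∃ t, enabledAt Wm m t ∧ m' = fireAt Wm Wp m t

/-- Reachability relation. -/
def reach {P T : Type*} (Wm Wp : P → T → ℕ) : (P → ℕ) → (P → ℕ) → Prop :=
  Relation.ReflTransGen (step Wm Wp)

/-- Input bag of a transition. -/
def preBag {P T : Type*} (Wm : P → T → ℕ) (t : T) : P → ℕ := fun p => Wm p t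

/-- Output bag of a transition. -/
def postBag {P T : Type*} (Wp : P → T → ℕ) (t : T) : P → ℕ := fun p => Wp p t

/-- The finite set of complexes of the net. -/
def complexes {P T : Type*} [Fintype P] [Fintype T] [DecidableEq P]
    (Wm Wp : P → T → ℕ) : Finset (P → ℕ) :=
  (Finset.univ.image (preBag Wm)) ∪ (Finset.univ.image (postBag Wp))

/-- `c` is a complex of the net. -/
def isComplex {P T : Type*} (Wm Wp : P → T → ℕ) (c : P → ℕ) : Prop :=
  (∃ t, c = preBag Wm t) ∨ (∃ t, c = postBag Wp t)

/-- Arc of the reaction graph. -/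
def rarc {P T : Type*} (Wm Wp : P → T → ℕ) (c c' : P → ℕ) : Prop :=
  ∃ t, c = preBag Wm t ∧ c' = postBag Wp t

/-- Weak reversibility: every connected component of the reaction graph is
strongly connected. -/
def weaklyReversible {P T : Type*} (Wm Wp : P → T → ℕ) : Prop :=
  ∀ c c', isComplex Wm Wp c → isComplex Wm Wp c' →
    Relation.ReflTransGen (fun a b => rarc Wm Wp a b ∨ rarc Wm Wp b a) c c' →
    Relation.ReflTransGen (rarc Wm Wp) c c'

/-- An `n`-level ordered Π-net.  Levels are indexed by `Fin n`, index `i`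
standing for level `i+1` of the informal definition.  Every level is a
strongly connected state machine through which the transitions of that level
route exactly one token; transitions of level `i+1` may in addition consume
and produce tokens of level `i`; every level (except the lowest) is connected
to the one below it; two transitions of a level sharing their input (resp.
output) place at that level have equal input (resp. output) bags; and the net
is weakly reversible. -/
structure OrderedPiNet (n : ℕ) (P T : Type*) [Fintype P] [Fintype T]
    [DecidableEq P] [DecidableEq T] where
  Wm : P → T → ℕ
  Wp : P → T → ℕ
  lvlP : P → Fin n
  lvlT : T → Fin n
  lvl_surj : Function.Surjective lvlP
  inPlace : T → P
  outPlace : T → P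
  inPlace_lvl : ∀ t, lvlP (inPlace t) = lvlT t
  outPlace_lvl : ∀ t, lvlP (outPlace t) = lvlT t
  Wm_in : ∀ t, Wm (inPlace t) t = 1
  Wp_out : ∀ t, Wp (outPlace t) t = 1
  Wm_own : ∀ t p, lvlP p = lvlT t → p ≠ inPlace t → Wm p t = 0
  Wp_own : ∀ t p, lvlP p = lvlT t → p ≠ outPlace t → Wp p t = 0
  Wm_below : ∀ t p, Wm p t ≠ 0 → lvlP p = lvlT t ∨ (lvlP p : ℕ) + 1 = (lvlT t : ℕ)
  Wp_below : ∀ t p, Wp p t ≠ 0 → lvlP p = lvlT t ∨ (lvlP p : ℕ) + 1 = (lvlT t : ℕ)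
  connected_below : ∀ i : Fin n, (i : ℕ) ≠ 0 →
    ∃ t p, lvlT t = i ∧ (lvlP p : ℕ) + 1 = (i : ℕ) ∧ Wm p t ≠ 0
  sameIn : ∀ t t', inPlace t = inPlace t' → ∀ p, Wm p t = Wm p t'
  sameOut : ∀ t t', outPlace t = outPlace t' → ∀ p, Wp p t = Wp p t'
  strong : ∀ p q, lvlP p = lvlP q →
    Relation.ReflTransGen (fun a b => ∃ t, inPlace t = a ∧ outPlace t = b) p q
  wr : weaklyReversible Wm Wp

namespace OrderedPiNet

variable {n : ℕ} {P T : Type*} [Fintype P] [Fintype T] [DecidableEq P] [DecidableEq T]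

/-- The potential `pot(p, q)`: the number of tokens `t•(q)` put in `q` by a
common input transition `t` of `p` and `q`, when `q` is one level below `p`,
and `0` otherwise. -/
noncomputable def pot (N : OrderedPiNet n P T) (p q : P) : ℕ :=
  if h : ((N.lvlP q : ℕ) + 1 = (N.lvlP p : ℕ)) ∧ ∃ t, N.outPlace t = p ∧ N.Wp q t ≠ 0
  then N.Wp q h.2.choose else 0

/-- The potential of a place: `pot(p) = ∑_{q} pot(p, q)`. -/
noncomputable def potT (N : OrderedPiNet n P T) (p : P) : ℕ := ∑ q, N.pot p q

/-- The marking witness transform `m ↦ m̃`: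
`m̃(p) = m(p) − ∑_{r one level above p} m̃(r) · pot(r, p)`. -/
noncomputable def mw (N : OrderedPiNet n P T) (m : P → ℤ) (p : P) : ℤ :=
  m p - ∑ r : P, (if h : (N.lvlP p : ℕ) + 1 = (N.lvlP r : ℕ)
    then N.mw m r * (N.pot r p : ℤ) else 0)
termination_by n - (N.lvlP p : ℕ)
decreasing_by
  have h1 : (N.lvlP r : ℕ) < n := (N.lvlP r).isLt
  omega

/-- The row `v_i` of S-invariants applied to a vector: `v_i · x = ∑_{p ∈ P_i} x̃(p)`. -/
noncomputable def vRow (N : OrderedPiNet n P T) (i : Fin n) (x : P → ℤ) : ℤ :=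
  ∑ p ∈ Finset.univ.filter (fun p => N.lvlP p = i), N.mw x p

/-- Number of tokens of `m` in `P_i`. -/
def lvlCount (N : OrderedPiNet n P T) (i : Fin n) (m : P → ℕ) : ℕ :=
  ∑ p ∈ Finset.univ.filter (fun p => N.lvlP p = i), m p

/-- Number of tokens of `m` in `P_{i−1}` (the level just below `i`). -/
def belowCount (N : OrderedPiNet n P T) (i : Fin n) (m : P → ℕ) : ℕ :=
  ∑ p ∈ Finset.univ.filter (fun p => (N.lvlP p : ℕ) + 1 = (i : ℕ)), m p

/-- The level-`i` minimal marked potential `φ_i(m)`. -/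
noncomputable def phi (N : OrderedPiNet n P T) (i : Fin n) (m : P → ℕ) : ℕ :=
  if N.lvlCount i m = 0
  then (Finset.univ.filter (fun p => N.lvlP p = i)).sup N.potT
  else sInf (N.potT '' {p | N.lvlP p = i ∧ m p ≠ 0})

/-- The Π³ condition: every interface place has maximal potential on its level. -/
def isPi3 (N : OrderedPiNet n P T) : Prop :=
  ∀ p t, (N.lvlP p : ℕ) + 1 = (N.lvlT t : ℕ) → N.Wp p t ≠ 0 →
    ∀ q, N.lvlP q = N.lvlP p → N.potT q ≤ N.potT p

/-- One step using only transitions of level index at most `i`. -/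
def stepUpTo (N : OrderedPiNet n P T) (i : Fin n) (m m' : P → ℕ) : Prop :=
  ∃ t, N.lvlT t ≤ i ∧ enabledAt N.Wm m t ∧ m' = fireAt N.Wm N.Wp m t

/-- Reachability using only transitions of level index at most `i` (the set `R_i`). -/
def reachUpTo (N : OrderedPiNet n P T) (i : Fin n) : (P → ℕ) → (P → ℕ) → Prop :=
  Relation.ReflTransGen (N.stepUpTo i)

/-- `i`-liveness. -/
def iLive (N : OrderedPiNet n P T) (i : Fin n) (m : P → ℕ) : Prop :=
  ∀ t, N.lvlT t ≤ i → ∃ m', N.reachUpTo i m m' ∧ enabledAt N.Wm m' t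

/-- The `i`-condition: `m(P_i) > 0` and `m(P_{j−1}) ≥ φ_j(m)` for all levels
`j` with `2 ≤ j ≤ i` (in 1-based numbering). -/
def iCond (N : OrderedPiNet n P T) (i : Fin n) (m : P → ℕ) : Prop :=
  N.lvlCount i m ≠ 0 ∧
  ∀ j : Fin n, 1 ≤ (j : ℕ) → j ≤ i → N.phi j m ≤ N.belowCount j m

end OrderedPiNet

/-!
Firing `t` adds the column `t• − •t` of the incidence matrix to the marking. The transform
`m ↦ m̃` is additive and sends this column to `1_{out t} − 1_{in t}`: one level below `t`,
`pot(out t, p) = t•(p)` by definition, and `pot(in t, p) = •t(p)` because weak reversibility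
provides a transition with output bag `•t`, whose output place is then `in t`. Both places lie
on the level of `t`, so every level sum of `m̃` is unchanged.
-/

theorem cast_fireAt {P T : Type*} {Wm Wp : P → T → ℕ} {m : P → ℕ} {t : T}
    (h : enabledAt Wm m t) (p : P) :
    (fireAt Wm Wp m t p : ℤ) = m p + ((Wp p t : ℤ) - Wm p t) := by
  rw [fireAt, Nat.cast_add, Nat.cast_sub (h p)]
  ring

theorem weaklyReversible.exists_postBag_eq_preBag {P T : Type*} {Wm Wp : P → T → ℕ}
    (hwr : weaklyReversible Wm Wp) (t : T) : ∃ t', postBag Wp t' = preBag Wm t := by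
  have hpath : Relation.ReflTransGen (rarc Wm Wp) (postBag Wp t) (preBag Wm t) :=
    hwr _ _ (Or.inr ⟨t, rfl⟩) (Or.inl ⟨t, rfl⟩)
      (Relation.ReflTransGen.single (Or.inr ⟨t, rfl, rfl⟩))
  rcases hpath.cases_tail with heq | ⟨_, _, t', _, hpost⟩
  · exact ⟨t, heq.symm⟩
  · exact ⟨t', hpost.symm⟩

namespace OrderedPiNet

variable {n : ℕ} {P T : Type*} [Fintype P] [Fintype T] [DecidableEq P] [DecidableEq T]
  (N : OrderedPiNet n P T)

theorem Wm_eq_zero_of_lvlP_ne {t : T} {p : P} (h₀ : N.lvlP p ≠ N.lvlT t)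
    (h₁ : (N.lvlP p : ℕ) + 1 ≠ N.lvlT t) : N.Wm p t = 0 := by
  by_contra h
  exact (N.Wm_below t p h).elim h₀ h₁

theorem Wp_eq_zero_of_lvlP_ne {t : T} {p : P} (h₀ : N.lvlP p ≠ N.lvlT t)
    (h₁ : (N.lvlP p : ℕ) + 1 ≠ N.lvlT t) : N.Wp p t = 0 := by
  by_contra h
  exact (N.Wp_below t p h).elim h₀ h₁

theorem Wm_of_lvlP_eq {t : T} {p : P} (h : N.lvlP p = N.lvlT t) :
    N.Wm p t = if p = N.inPlace t then 1 else 0 := by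
  split_ifs with hp
  · exact hp ▸ N.Wm_in t
  · exact N.Wm_own t p h hp

theorem Wp_of_lvlP_eq {t : T} {p : P} (h : N.lvlP p = N.lvlT t) :
    N.Wp p t = if p = N.outPlace t then 1 else 0 := by
  split_ifs with hp
  · exact hp ▸ N.Wp_out t
  · exact N.Wp_own t p h hp

/-- The transition supplied by weak reversibility ends where `t` starts, since the only
place of level `lvlT t'` that it marks is its output place. -/
theorem exists_outPlace_eq_inPlace (t : T) :
    ∃ t', N.outPlace t' = N.inPlace t ∧ ∀ q, N.Wp q t' = N.Wm q t := by
  obtain ⟨t', hbag⟩ := N.wr.exists_postBag_eq_preBag t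
  have hbag' (q : P) : N.Wp q t' = N.Wm q t := congrFun hbag q
  refine ⟨t', ?_, hbag'⟩
  have hin : N.Wp (N.inPlace t) t' ≠ 0 := by rw [hbag', N.Wm_in]; exact one_ne_zero
  have hout : N.Wm (N.outPlace t') t ≠ 0 := by rw [← hbag', N.Wp_out]; exact one_ne_zero
  have hlvl : N.lvlP (N.inPlace t) = N.lvlT t' := by
    rcases N.Wp_below t' _ hin with h | h
    · exact h
    · rw [N.inPlace_lvl] at h
      rcases N.Wm_below t _ hout with h' | h' <;> rw [N.outPlace_lvl] at h' <;> omega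
  by_contra hne
  exact hin (N.Wp_own t' _ hlvl (Ne.symm hne))

theorem pot_outPlace {t : T} {p : P} (hp : (N.lvlP p : ℕ) + 1 = N.lvlT t) :
    N.pot (N.outPlace t) p = N.Wp p t := by
  rw [pot]
  split_ifs with h
  · exact N.sameOut _ t h.2.choose_spec.1 p
  · by_contra hne
    exact h ⟨by rw [N.outPlace_lvl]; exact hp, t, rfl, Ne.symm hne⟩

theorem pot_inPlace {t : T} {p : P} (hp : (N.lvlP p : ℕ) + 1 = N.lvlT t) :
    N.pot (N.inPlace t) p = N.Wm p t := by
  obtain ⟨t', hout, hbag⟩ := N.exists_outPlace_eq_inPlace t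
  have hlvl : N.lvlT t' = N.lvlT t := by rw [← N.outPlace_lvl, hout, N.inPlace_lvl]
  rw [← hout, N.pot_outPlace (hlvl ▸ hp), hbag]

theorem mw_eq_sub_sum (m : P → ℤ) (p : P) :
    N.mw m p = m p - ∑ r ∈ univ.filter (fun r => (N.lvlP p : ℕ) + 1 = N.lvlP r),
      N.mw m r * N.pot r p := by
  rw [mw, sum_filter]
  simp only [dite_eq_ite]

theorem mw_add (x y : P → ℤ) (p : P) :
    N.mw (fun q => x q + y q) p = N.mw x p + N.mw y p := by
  rw [mw_eq_sub_sum, mw_eq_sub_sum N x, mw_eq_sub_sum N y,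
    sum_congr rfl fun r hr => by rw [mw_add x y r, add_mul], sum_add_distrib]
  ring
termination_by n - (N.lvlP p : ℕ)
decreasing_by
  have := (N.lvlP r).isLt
  simp only [mem_filter] at hr
  omega

/-- The tokens that `t` consumes and produces one level below are the potentials of its input
and output places, so they cancel in `m̃`. -/
theorem mw_column (t : T) (p : P) :
    N.mw (fun q => (N.Wp q t : ℤ) - N.Wm q t) p =
      (if p = N.outPlace t then 1 else 0) - (if p = N.inPlace t then 1 else 0) := by
  have above : ∑ r ∈ univ.filter (fun r => (N.lvlP p : ℕ) + 1 = N.lvlP r),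
      N.mw (fun q => (N.Wp q t : ℤ) - N.Wm q t) r * N.pot r p =
        if (N.lvlP p : ℕ) + 1 = N.lvlT t then (N.Wp p t : ℤ) - N.Wm p t else 0 := by
    rw [sum_congr rfl fun r hr => by rw [mw_column t r]]
    simp only [sub_mul, ite_mul, one_mul, zero_mul, sum_sub_distrib, sum_ite_eq', mem_filter,
      mem_univ, true_and, N.outPlace_lvl, N.inPlace_lvl]
    split_ifs with hp
    · rw [N.pot_outPlace hp, N.pot_inPlace hp]
    · ring
  have hout : N.lvlP p ≠ N.lvlT t → p ≠ N.outPlace t := fun h hp => h (hp ▸ N.outPlace_lvl t)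
  have hin : N.lvlP p ≠ N.lvlT t → p ≠ N.inPlace t := fun h hp => h (hp ▸ N.inPlace_lvl t)
  rw [mw_eq_sub_sum, above]
  by_cases hsame : N.lvlP p = N.lvlT t
  · have hne : (N.lvlP p : ℕ) + 1 ≠ N.lvlT t := by rw [hsame]; omega
    rw [if_neg hne, N.Wp_of_lvlP_eq hsame, N.Wm_of_lvlP_eq hsame]
    split_ifs <;> simp
  by_cases hbelow : (N.lvlP p : ℕ) + 1 = N.lvlT t
  · rw [if_pos hbelow, if_neg (hout hsame), if_neg (hin hsame)]
    ring
  · rw [if_neg hbelow, if_neg (hout hsame), if_neg (hin hsame),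
      N.Wp_eq_zero_of_lvlP_ne hsame hbelow, N.Wm_eq_zero_of_lvlP_ne hsame hbelow]
    simp
termination_by n - (N.lvlP p : ℕ)
decreasing_by
  have := (N.lvlP r).isLt
  simp only [mem_filter] at hr
  omega

theorem vRow_add (i : Fin n) (x y : P → ℤ) :
    N.vRow i (fun q => x q + y q) = N.vRow i x + N.vRow i y := by
  rw [vRow, vRow, vRow, ← sum_add_distrib]
  exact sum_congr rfl fun p _ => N.mw_add x y p

theorem vRow_column (i : Fin n) (t : T) :
    N.vRow i (fun p => (N.Wp p t : ℤ) - N.Wm p t) = 0 := by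
  simp only [vRow, mw_column, sum_sub_distrib, sum_ite_eq', mem_filter, mem_univ, true_and,
    N.outPlace_lvl, N.inPlace_lvl, sub_self]

theorem vRow_fireAt {m : P → ℕ} {t : T} (h : enabledAt N.Wm m t) (i : Fin n) :
    N.vRow i (fun p => (fireAt N.Wm N.Wp m t p : ℤ)) = N.vRow i (fun p => (m p : ℤ)) := by
  simp only [cast_fireAt h, vRow_add, vRow_column, add_zero]

end OrderedPiNet

/-- The level sums of the marking witness are reachability invariants, and the
corresponding vectors `v_i = ∑_{p ∈ P_i} B(p)` are S-semi-flows (`v_i · W = 0`). -/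
theorem stmt13 {n : ℕ} {P T : Type*} [Fintype P] [Fintype T] [DecidableEq P]
    [DecidableEq T] (N : OrderedPiNet n P T) (m0 : P → ℕ) :
    (∀ m, reach N.Wm N.Wp m0 m → ∀ i : Fin n,
      N.vRow i (fun p => (m p : ℤ)) = N.vRow i (fun p => (m0 p : ℤ))) ∧
    (∀ (i : Fin n) (t : T),
      N.vRow i (fun p => (N.Wp p t : ℤ) - (N.Wm p t : ℤ)) = 0) := by
  refine ⟨fun m hm i => ?_, N.vRow_column⟩
  induction hm with
  | refl => rfl
  | tail _ hstep ih =>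
    obtain ⟨t, hen, rfl⟩ := hstep
    rw [N.vRow_fireAt hen, ih]
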